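/- Let D be a τ-admissible Bregman divergence (τ ≥ 1) over an open convex domain 𝒳 ⊆ ℝ^d, let 0 < ε ≤ 1, and let β ≥ 4τ²/ε. Let B_w ⊂ 𝒳 be a Euclidean ball and q ∈ 𝒳 a point with dist(q, B_w) ≥ β·diam(B_w). Then for any points p, p′ ∈ B_w: |D(q, p) − D(q, p′)| ≤ ε·D(q, p). -/

import Mathlib

open Metric
open scoped RealInnerProductSpace

/-- The Bregman divergence of `F`: `D(q, p) = F(q) − F(p) − ⟨∇F(p), q − p⟩`. -/
noncomputable def breg {d : ℕ} (F : EuclideanSpace ℝ (Fin d) → ℝ)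
    (q p : EuclideanSpace ℝ (Fin d)) : ℝ :=
  F q - F p - ⟪gradient F p, q - p⟫

/-!
Write `φ = D(q, ·)`; its derivative at `x` is `v ↦ -⟪∇²F(x) v, q - x⟫`. The key estimate is
`‖∇²F(x)‖ ‖q - x‖² ≤ 2τ² D(q, x)`: the function `g t = ⟪∇F(x + t(q - x)) - ∇F(x), q - x⟫`
integrates to `D(q, x)` over `[0, 1]`, so `g t ≤ 2t D(q, x)` for some `t ∈ (0, 1]`, and
admissibility at `(x, y)` with `y = x + t(q - x)` gives
`‖∇²F(x)‖ t² ‖q - x‖² ≤ τ² D(x, y) ≤ τ² (D(x, y) + D(y, x)) = τ² t g t ≤ 2τ² t² D(q, x)`.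
As `‖q - x‖ ≥ β diam B` on the ball `B`, the mean value inequality bounds the oscillation of `φ`
on `B` by `(2τ²/β) max_B φ ≤ (ε/2) max_B φ`; hence `max_B φ ≤ 2 φ(p)` for every `p ∈ B`.
-/

open Set

theorem ContDiffOn.gradient_of_isOpen {E : Type*} [NormedAddCommGroup E] [InnerProductSpace ℝ E]
    [CompleteSpace E] {f : E → ℝ} {s : Set E} {m n : WithTop ℕ∞} (hf : ContDiffOn ℝ n f s)
    (hs : IsOpen s) (hmn : m + 1 ≤ n) : ContDiffOn ℝ m (gradient f) s :=
  (InnerProductSpace.toDual ℝ E).symm.contDiff.comp_contDiffOn (hf.fderiv_of_isOpen hs hmn)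

theorem exists_mem_Ioc_le_of_intervalIntegral_le {f g : ℝ → ℝ} {a b : ℝ} (hab : a < b)
    (hf : ContinuousOn f (Icc a b)) (hg : ContinuousOn g (Icc a b))
    (h : ∫ x in a..b, f x ≤ ∫ x in a..b, g x) : ∃ t ∈ Ioc a b, f t ≤ g t := by
  by_contra! hlt
  exact (intervalIntegral.integral_lt_integral_of_continuousOn_of_le_of_exists_lt hab hg hf
    (fun t ht => (hlt t ht).le) ⟨b, right_mem_Icc.2 hab.le, hlt b (right_mem_Ioc.2 hab)⟩).not_ge h

theorem Convex.abs_sub_le_of_norm_hasFDerivWithin_mul_diam_le {E : Type*}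
    [NormedAddCommGroup E] [NormedSpace ℝ E] {φ : E → ℝ} {φ' : E → E →L[ℝ] ℝ} {s : Set E}
    {L : ℝ} (hs : Convex ℝ s) (hsb : Bornology.IsBounded s)
    (hφ : ∀ x ∈ s, HasFDerivWithinAt φ (φ' x) s x) (hL : ∀ x ∈ s, ‖φ' x‖ * diam s ≤ L)
    {a b : E} (ha : a ∈ s) (hb : b ∈ s) : |φ a - φ b| ≤ L := by
  have hL0 : 0 ≤ L := (by positivity : 0 ≤ ‖φ' a‖ * diam s).trans (hL a ha)
  rcases (diam_nonneg (s := s)).eq_or_lt with h0 | hpos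
  · obtain rfl : a = b := dist_le_zero.1 (h0 ▸ dist_le_diam_of_mem hsb ha hb)
    simpa using hL0
  · have hbound : ∀ x ∈ s, ‖φ' x‖ ≤ L / diam s := fun x hx => (le_div_iff₀ hpos).2 (hL x hx)
    calc |φ a - φ b| ≤ L / diam s * ‖a - b‖ :=
          hs.norm_image_sub_le_of_norm_hasFDerivWithin_le hφ hbound hb ha
      _ ≤ L / diam s * diam s := by
          gcongr
          exact (dist_eq_norm a b).symm.trans_le (dist_le_diam_of_mem hsb ha hb)
      _ = L := div_mul_cancel₀ L hpos.ne'

section Bregman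

variable {d : ℕ} {F : EuclideanSpace ℝ (Fin d) → ℝ} {𝒳 : Set (EuclideanSpace ℝ (Fin d))}
  {τ : ℝ}

def IsBregAdmissible (𝒳 : Set (EuclideanSpace ℝ (Fin d))) (F : EuclideanSpace ℝ (Fin d) → ℝ)
    (τ : ℝ) : Prop :=
  ∀ q ∈ 𝒳, ∀ p ∈ 𝒳,
    ‖gradient F q - gradient F p‖ * ‖q - p‖ ≤ τ * breg F q p ∧
    ‖fderiv ℝ (gradient F) q‖ * ‖q - p‖ ^ 2 ≤ τ ^ 2 * breg F q p

theorem breg_add_breg_swap (F : EuclideanSpace ℝ (Fin d) → ℝ) (x y : EuclideanSpace ℝ (Fin d)) :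
    breg F x y + breg F y x = ⟪gradient F y - gradient F x, y - x⟫ := by
  have : x - y = -(y - x) := (neg_sub y x).symm
  simp only [breg, this, inner_neg_right, inner_sub_left]
  ring

theorem IsBregAdmissible.breg_nonneg (hadm : IsBregAdmissible 𝒳 F τ) (hτ : 0 < τ)
    {q p : EuclideanSpace ℝ (Fin d)} (hq : q ∈ 𝒳) (hp : p ∈ 𝒳) : 0 ≤ breg F q p :=
  nonneg_of_mul_nonneg_right
    ((mul_nonneg (norm_nonneg _) (norm_nonneg _)).trans (hadm q hq p hp).1) hτ

theorem continuousOn_inner_gradient_segment (hopen : IsOpen 𝒳) (hconv : Convex ℝ 𝒳)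
    (hF : ContDiffOn ℝ 1 F 𝒳) {q x : EuclideanSpace ℝ (Fin d)} (hq : q ∈ 𝒳) (hx : x ∈ 𝒳) :
    ContinuousOn (fun t : ℝ => ⟪gradient F (x + t • (q - x)) - gradient F x, q - x⟫)
      (Icc 0 1) :=
  ((((hF.gradient_of_isOpen (m := 0) hopen le_rfl).continuousOn).comp (by fun_prop)
    fun _ ht => hconv.add_smul_sub_mem hx hq ht).sub continuousOn_const).inner continuousOn_const

theorem breg_eq_intervalIntegral (hopen : IsOpen 𝒳) (hconv : Convex ℝ 𝒳)
    (hF : ContDiffOn ℝ 1 F 𝒳) {q x : EuclideanSpace ℝ (Fin d)} (hq : q ∈ 𝒳) (hx : x ∈ 𝒳) :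
    breg F q x = ∫ t in (0 : ℝ)..1, ⟪gradient F (x + t • (q - x)) - gradient F x, q - x⟫ := by
  set u := q - x
  have hderiv : ∀ t ∈ uIcc (0 : ℝ) 1,
      HasDerivAt (fun s : ℝ => F (x + s • u) - s * ⟪gradient F x, u⟫)
        ⟪gradient F (x + t • u) - gradient F x, u⟫ t := by
    intro t ht
    rw [uIcc_of_le zero_le_one] at ht
    have hFt : HasFDerivAt F (fderiv ℝ F (x + t • u)) (x + t • u) :=
      ((hF.contDiffAt (hopen.mem_nhds (hconv.add_smul_sub_mem hx hq ht))).differentiableAt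
        one_ne_zero).hasFDerivAt
    have hline : HasDerivAt (fun s : ℝ => x + s • u) u t := by
      simpa using ((hasDerivAt_id t).smul_const u).const_add x
    have hFline : HasDerivAt (fun s : ℝ => F (x + s • u)) ⟪gradient F (x + t • u), u⟫ t := by
      rw [inner_gradient_left]
      exact hFt.comp_hasDerivAt t hline
    rw [inner_sub_left]
    exact hFline.sub (hasDerivAt_mul_const _)
  have hcont := continuousOn_inner_gradient_segment hopen hconv hF hq hx
  rw [← uIcc_of_le zero_le_one] at hcont
  rw [intervalIntegral.integral_eq_sub_of_hasDerivAt hderiv hcont.intervalIntegrable]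
  simp [breg, u]
  ring

theorem hasFDerivAt_breg_right (hF : ContDiffOn ℝ 2 F 𝒳) (hopen : IsOpen 𝒳)
    (q : EuclideanSpace ℝ (Fin d)) {x : EuclideanSpace ℝ (Fin d)} (hx : x ∈ 𝒳) :
    HasFDerivAt (breg F q) (-(innerSL ℝ (q - x)).comp (fderiv ℝ (gradient F) x)) x := by
  have hFx : HasFDerivAt F (fderiv ℝ F x) x :=
    ((hF.contDiffAt (hopen.mem_nhds hx)).differentiableAt two_ne_zero).hasFDerivAt
  have hGx : HasFDerivAt (gradient F) (fderiv ℝ (gradient F) x) x :=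
    (((hF.gradient_of_isOpen (m := 1) hopen le_rfl).contDiffAt
      (hopen.mem_nhds hx)).differentiableAt one_ne_zero).hasFDerivAt
  refine ((hFx.const_sub (F q)).sub
    (hGx.inner ℝ ((hasFDerivAt_id x).const_sub q))).congr_fderiv ?_
  ext v
  simp [inner_gradient_left, real_inner_comm, inner_sub_left]

theorem IsBregAdmissible.norm_fderiv_gradient_mul_sq_le (hadm : IsBregAdmissible 𝒳 F τ)
    (hτ : 0 < τ) (hopen : IsOpen 𝒳) (hconv : Convex ℝ 𝒳) (hF : ContDiffOn ℝ 1 F 𝒳)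
    {q x : EuclideanSpace ℝ (Fin d)} (hq : q ∈ 𝒳) (hx : x ∈ 𝒳) :
    ‖fderiv ℝ (gradient F) x‖ * ‖q - x‖ ^ 2 ≤ 2 * τ ^ 2 * breg F q x := by
  set u := q - x
  set I := breg F q x
  -- both sides integrate to `I` over `[0, 1]`
  obtain ⟨t, ⟨ht0, ht1⟩, hgt⟩ : ∃ t ∈ Ioc (0 : ℝ) 1,
      ⟪gradient F (x + t • u) - gradient F x, u⟫ ≤ 2 * t * I := by
    refine exists_mem_Ioc_le_of_intervalIntegral_le one_pos
      (continuousOn_inner_gradient_segment hopen hconv hF hq hx) (by fun_prop) ?_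
    rw [← breg_eq_intervalIntegral hopen hconv hF hq hx, intervalIntegral.integral_mul_const,
      intervalIntegral.integral_const_mul, integral_id]
    norm_num [I]
  set y := x + t • u
  have hy : y ∈ 𝒳 := hconv.add_smul_sub_mem hx hq ⟨ht0.le, ht1⟩
  have hsum : breg F x y + breg F y x = t * ⟪gradient F y - gradient F x, u⟫ := by
    rw [breg_add_breg_swap, show y - x = t • u by simp [y], inner_smul_right]
  have hxy : ‖x - y‖ = t * ‖u‖ := by
    rw [show x - y = -(t • u) by simp [y], norm_neg, norm_smul, Real.norm_of_nonneg ht0.le]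
  have hbound : ‖fderiv ℝ (gradient F) x‖ * ‖u‖ ^ 2 * t ^ 2 ≤ 2 * τ ^ 2 * I * t ^ 2 :=
    calc ‖fderiv ℝ (gradient F) x‖ * ‖u‖ ^ 2 * t ^ 2
        = ‖fderiv ℝ (gradient F) x‖ * ‖x - y‖ ^ 2 := by rw [hxy]; ring
      _ ≤ τ ^ 2 * breg F x y := (hadm x hx y hy).2
      _ ≤ τ ^ 2 * (t * ⟪gradient F y - gradient F x, u⟫) := by
          gcongr
          linarith [hadm.breg_nonneg hτ hy hx]
      _ ≤ τ ^ 2 * (t * (2 * t * I)) := by gcongr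
      _ = 2 * τ ^ 2 * I * t ^ 2 := by ring
  exact le_of_mul_le_mul_right hbound (by positivity)

theorem IsBregAdmissible.abs_breg_sub_breg_le (hadm : IsBregAdmissible 𝒳 F τ) (hτ : 0 < τ)
    (hopen : IsOpen 𝒳) (hconv : Convex ℝ 𝒳) (hF : ContDiffOn ℝ 2 F 𝒳)
    {s : Set (EuclideanSpace ℝ (Fin d))} (hs : Convex ℝ s) (hsb : Bornology.IsBounded s)
    (hs𝒳 : s ⊆ 𝒳) {q : EuclideanSpace ℝ (Fin d)} (hq : q ∈ 𝒳) {β : ℝ} (hβ : 0 < β)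
    (hsep : β * diam s ≤ infDist q s) {M : ℝ} (hM : ∀ y ∈ s, breg F q y ≤ M)
    {a b : EuclideanSpace ℝ (Fin d)} (ha : a ∈ s) (hb : b ∈ s) :
    |breg F q a - breg F q b| ≤ 2 * τ ^ 2 / β * M := by
  refine hs.abs_sub_le_of_norm_hasFDerivWithin_mul_diam_le hsb
    (fun x hx => (hasFDerivAt_breg_right hF hopen q (hs𝒳 hx)).hasFDerivWithinAt)
    (fun x hx => ?_) ha hb
  set H := fderiv ℝ (gradient F) x
  have hderiv : ‖-(innerSL ℝ (q - x)).comp H‖ ≤ ‖q - x‖ * ‖H‖ := by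
    rw [norm_neg, ← innerSL_apply_norm ℝ (q - x)]
    exact ContinuousLinearMap.opNorm_comp_le _ _
  have hfar : β * diam s ≤ ‖q - x‖ :=
    hsep.trans ((infDist_le_dist_of_mem hx).trans_eq (dist_eq_norm q x))
  rw [div_mul_eq_mul_div, le_div_iff₀ hβ]
  calc ‖-(innerSL ℝ (q - x)).comp H‖ * diam s * β
      = ‖-(innerSL ℝ (q - x)).comp H‖ * (β * diam s) := by ring
    _ ≤ ‖q - x‖ * ‖H‖ * ‖q - x‖ := by gcongr
    _ = ‖H‖ * ‖q - x‖ ^ 2 := by ring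
    _ ≤ 2 * τ ^ 2 * breg F q x :=
        hadm.norm_fderiv_gradient_mul_sq_le hτ hopen hconv (hF.of_le one_le_two) hq (hs𝒳 hx)
    _ ≤ 2 * τ ^ 2 * M := by gcongr; exact hM x hx

end Bregman

theorem stmt19_general
    {d : ℕ} (𝒳 : Set (EuclideanSpace ℝ (Fin d)))
    (hopen : IsOpen 𝒳) (hconv : Convex ℝ 𝒳)
    (F : EuclideanSpace ℝ (Fin d) → ℝ)
    (hF : ContDiffOn ℝ 2 F 𝒳)
    (τ : ℝ) (hτ : 1 ≤ τ)
    (hadm : ∀ q ∈ 𝒳, ∀ p ∈ 𝒳,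
      ‖gradient F q - gradient F p‖ * ‖q - p‖ ≤ τ * breg F q p ∧
      ‖fderiv ℝ (gradient F) q‖ * ‖q - p‖ ^ 2 ≤ τ ^ 2 * breg F q p)
    (ε : ℝ) (hε0 : 0 < ε) (hε1 : ε ≤ 1)
    (β : ℝ) (hβ : 4 * τ ^ 2 / ε ≤ β)
    (c : EuclideanSpace ℝ (Fin d)) (r : ℝ)
    (hBw : closedBall c r ⊆ 𝒳)
    (q : EuclideanSpace ℝ (Fin d)) (hq : q ∈ 𝒳)
    (hsep : infDist q (closedBall c r) ≥ β * diam (closedBall c r)) :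
    ∀ p ∈ closedBall c r, ∀ p' ∈ closedBall c r,
      |breg F q p - breg F q p'| ≤ ε * breg F q p := by
  intro p hp p' hp'
  have hτ0 : 0 < τ := by linarith
  have hβ0 : 0 < β := (by positivity : 0 < 4 * τ ^ 2 / ε).trans_le hβ
  have hδ : 2 * τ ^ 2 / β ≤ ε / 2 := by
    rw [div_le_iff₀ hε0] at hβ
    rw [div_le_iff₀ hβ0]
    linarith
  obtain ⟨pm, hpm, hmax⟩ := (isCompact_closedBall c r).exists_isMaxOn ⟨p, hp⟩
    fun x hx => (hasFDerivAt_breg_right hF hopen q (hBw hx)).continuousAt.continuousWithinAt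
  have hosc : ∀ a ∈ closedBall c r, ∀ b ∈ closedBall c r,
      |breg F q a - breg F q b| ≤ 2 * τ ^ 2 / β * breg F q pm := fun a ha b hb =>
    IsBregAdmissible.abs_breg_sub_breg_le hadm hτ0 hopen hconv hF (convex_closedBall c r)
      isBounded_closedBall hBw hq hβ0 hsep (fun y hy => hmax hy) ha hb
  have hp0 : 0 ≤ breg F q p := IsBregAdmissible.breg_nonneg hadm hτ0 hq (hBw hp)
  have hM0 : 0 ≤ breg F q pm := hp0.trans (hmax hp)
  have hM : breg F q pm ≤ 2 * breg F q p := by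
    have hdev := (le_abs_self _).trans (hosc pm hpm p hp)
    have hhalf := mul_le_mul_of_nonneg_right (hδ.trans (by linarith : ε / 2 ≤ 1 / 2)) hM0
    linarith
  calc |breg F q p - breg F q p'| ≤ 2 * τ ^ 2 / β * breg F q pm := hosc p hp p' hp'
    _ ≤ ε / 2 * (2 * breg F q p) := by gcongr
    _ = ε * breg F q p := by ring

/-- Lemma 5.3 of the paper: let `D` be a `τ`-admissible Bregman divergence (`τ ≥ 1`) over
an open convex domain `𝒳`, `0 < ε ≤ 1`, and `β ≥ 4τ²/ε`. If `B_w ⊆ 𝒳` is a Euclidean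
ball and `q ∈ 𝒳` satisfies `dist(q, B_w) ≥ β·diam(B_w)`, then for any `p, p' ∈ B_w`,
`|D(q,p) − D(q,p')| ≤ ε·D(q,p)`. -/
theorem stmt19
    {d : ℕ} (𝒳 : Set (EuclideanSpace ℝ (Fin d)))
    (hopen : IsOpen 𝒳) (hconv : Convex ℝ 𝒳)
    (F : EuclideanSpace ℝ (Fin d) → ℝ)
    (hsc : StrictConvexOn ℝ 𝒳 F) (hF : ContDiffOn ℝ 2 F 𝒳)
    (τ : ℝ) (hτ : 1 ≤ τ)
    (hadm : ∀ q ∈ 𝒳, ∀ p ∈ 𝒳,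
      ‖gradient F q - gradient F p‖ * ‖q - p‖ ≤ τ * breg F q p ∧
      ‖fderiv ℝ (gradient F) q‖ * ‖q - p‖ ^ 2 ≤ τ ^ 2 * breg F q p)
    (ε : ℝ) (hε0 : 0 < ε) (hε1 : ε ≤ 1)
    (β : ℝ) (hβ : 4 * τ ^ 2 / ε ≤ β)
    (c : EuclideanSpace ℝ (Fin d)) (r : ℝ) (hr : 0 < r)
    (hBw : closedBall c r ⊆ 𝒳)
    (q : EuclideanSpace ℝ (Fin d)) (hq : q ∈ 𝒳)
    (hsep : infDist q (closedBall c r) ≥ β * diam (closedBall c r)) :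
    ∀ p ∈ closedBall c r, ∀ p' ∈ closedBall c r,
      |breg F q p - breg F q p'| ≤ ε * breg F q p :=
  stmt19_general 𝒳 hopen hconv F hF τ hτ hadm ε hε0 hε1 β hβ c r hBw q hq hsep
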